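/- Let u be a unitary (or orthogonal) operator on a Hilbert space H. Define f₀ = 1 ⊗ [[0,1],[−1,0]] and f₁ = u ⊗ [[0,1],[0,0]] + u^{−1} ⊗ [[0,0],[−1,0]] on H ⊗ R². Then f₀ and f₁ are skew-adjoint with f₀² = f₁² = −1, and for t ∈ [0,1] the operator (1−t)f₀ + tf₁ fails to be invertible exactly when t = 1/2 and −1 lies in the spectrum of u. -/

import Mathlib

open ContinuousLinearMap

/-- The bounded operator on H ⊕ H (with its Hilbert sum structure `WithLp 2 (H × H)`)
given by the 2×2 operator matrix [[a, b], [c, d]]. -/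
noncomputable def blockOp {H : Type*} [NormedAddCommGroup H] [InnerProductSpace ℂ H]
    (a b c d : H →L[ℂ] H) : WithLp 2 (H × H) →L[ℂ] WithLp 2 (H × H) :=
  ((WithLp.prodContinuousLinearEquiv 2 ℂ H H).symm : H × H →L[ℂ] WithLp 2 (H × H)) ∘L
    (((a ∘L ContinuousLinearMap.fst ℂ H H) + (b ∘L ContinuousLinearMap.snd ℂ H H)).prod
      ((c ∘L ContinuousLinearMap.fst ℂ H H) + (d ∘L ContinuousLinearMap.snd ℂ H H))) ∘L
    ((WithLp.prodContinuousLinearEquiv 2 ℂ H H) : WithLp 2 (H × H) →L[ℂ] H × H)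

section Aux

variable {H : Type*} [NormedAddCommGroup H] [InnerProductSpace ℂ H]

lemma blockOp_apply (a b c d : H →L[ℂ] H) (x : WithLp 2 (H × H)) :
    blockOp a b c d x = (WithLp.equiv 2 (H × H)).symm
      (a (WithLp.equiv 2 (H × H) x).1 + b (WithLp.equiv 2 (H × H) x).2,
       c (WithLp.equiv 2 (H × H) x).1 + d (WithLp.equiv 2 (H × H) x).2) := by
  simp only [blockOp, comp_apply, coe_coe]; rfl

lemma blockOp_mul (a b c d a' b' c' d' : H →L[ℂ] H) :
    blockOp a b c d * blockOp a' b' c' d' =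
      blockOp (a * a' + b * c') (a * b' + b * d') (c * a' + d * c') (c * b' + d * d') := by
  ext x
  simp [mul_apply, blockOp_apply]
  constructor <;> abel

lemma blockOp_add (a b c d a' b' c' d' : H →L[ℂ] H) :
    blockOp a b c d + blockOp a' b' c' d' = blockOp (a+a') (b+b') (c+c') (d+d') := by
  ext x
  simp [blockOp_apply, ← WithLp.toLp_add, (WithLp.toLp_injective 2).eq_iff, Prod.mk_add_mk]
  constructor <;> abel

lemma blockOp_smul (t : ℝ) (a b c d : H →L[ℂ] H) :
    t • blockOp a b c d = blockOp (t•a) (t•b) (t•c) (t•d) := by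
  ext x
  simp [blockOp_apply, ← WithLp.toLp_smul, (WithLp.toLp_injective 2).eq_iff, Prod.smul_mk, smul_add]

lemma blockOp_neg (a b c d : H →L[ℂ] H) :
    - blockOp a b c d = blockOp (-a) (-b) (-c) (-d) := by
  ext x
  simp [blockOp_apply, ← WithLp.toLp_neg, (WithLp.toLp_injective 2).eq_iff, Prod.neg_mk]
  constructor <;> abel

lemma blockOp_one : blockOp (1 : H →L[ℂ] H) 0 0 1 = 1 := by
  ext x
  simp [blockOp_apply]
  rfl

lemma blockOp_neg_one : blockOp (-1 : H →L[ℂ] H) 0 0 (-1) = -1 := by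
  calc blockOp (-1 : H →L[ℂ] H) 0 0 (-1) = - blockOp 1 0 0 1 := by rw [blockOp_neg]; norm_num
  _ = -1 := by rw [blockOp_one]

variable [CompleteSpace H]

lemma blockOp_adjoint (a b c d : H →L[ℂ] H) :
    adjoint (blockOp a b c d) = blockOp (adjoint a) (adjoint c) (adjoint b) (adjoint d) := by
  symm
  rw [eq_adjoint_iff]
  intro x y
  simp only [blockOp_apply, WithLp.prod_inner_apply, inner_add_left, inner_add_right,
    adjoint_inner_left]
  change _ = (inner ℂ x.fst (a y.fst + b y.snd) + inner ℂ x.snd (c y.fst + d y.snd) : ℂ)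
  simp [inner_add_left, inner_add_right, adjoint_inner_left]
  ring

lemma isUnit_blockOp_offdiag (b c : H →L[ℂ] H) :
    IsUnit (blockOp 0 b c 0) ↔ IsUnit b ∧ IsUnit c := by
  have key : ⇑(blockOp (0 : H →L[ℂ] H) b c 0) =
      ⇑(WithLp.equiv 2 (H × H)).symm ∘ (Prod.map ⇑b ⇑c) ∘ ⇑(Equiv.prodComm H H) ∘
        ⇑(WithLp.equiv 2 (H × H)) := by
    funext x
    simp [blockOp_apply, Prod.map]
  rw [ContinuousLinearMap.isUnit_iff_bijective, ContinuousLinearMap.isUnit_iff_bijective,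
    ContinuousLinearMap.isUnit_iff_bijective, key]
  rw [← Function.comp_assoc, ← Function.comp_assoc]
  rw [Equiv.bijective_comp, Function.comp_assoc, Equiv.comp_bijective, Equiv.bijective_comp,
    Prod.map_bijective]

lemma isUnit_convex_iff (u v : H →L[ℂ] H) (huv : u * v = 1) (hvu : v * u = 1)
    (hu : adjoint u = v) (t : ℝ) (ht0 : 0 < t) (ht1 : t ≤ 1) :
    ¬ IsUnit ((1 - t) • (1 : H →L[ℂ] H) + t • u) ↔
      (t = 1/2 ∧ (-1 : ℂ) ∈ spectrum ℂ u) := by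
  set z : ℂ := ((↑(-((1 - t)/t)) : ℂ) : ℂ)
  have hw : (1 - t) • (1 : H →L[ℂ] H) + t • u
      = ((-t : ℝ) : ℂ) • (algebraMap ℂ (H →L[ℂ] H) z - u) := by
    rw [Algebra.algebraMap_eq_smul_one, smul_sub, smul_smul]
    have htne : (t : ℂ) ≠ 0 := by exact_mod_cast ht0.ne'
    have h1 : ((-t : ℝ) : ℂ) * z = ((1 - t : ℝ) : ℂ) := by
      push_cast [z]
      field_simp
    rw [h1]
    have h2 : ((1 - t : ℝ) : ℂ) • (1 : H →L[ℂ] H) = (1 - t) • 1 :=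
      Complex.coe_smul _ _
    have h3 : ((-t : ℝ) : ℂ) • u = -(t • u) := by
      rw [Complex.coe_smul, neg_smul]
    rw [h2, h3]
    abel
  have hne : ((-t : ℝ) : ℂ) ≠ 0 := by
    simp
    positivity
  have hiu : IsUnit ((1 - t) • (1 : H →L[ℂ] H) + t • u)
      ↔ IsUnit (algebraMap ℂ (H →L[ℂ] H) z - u) := by
    rw [hw, ← Units.smul_mk0 (α := H →L[ℂ] H) hne, isUnit_smul_iff]
  rw [hiu, ← spectrum.mem_iff]
  have hmem : u ∈ unitary (H →L[ℂ] H) := by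
    constructor
    · rw [star_eq_adjoint, hu]; exact hvu
    · rw [star_eq_adjoint, hu]; exact huv
  have hsp := spectrum.subset_circle_of_unitary (𝕜 := ℂ) hmem
  constructor
  · rintro hz
    have hnorm : ‖z‖ = 1 := by
      simpa [mem_sphere_zero_iff_norm] using hsp hz
    have h4 : |(1 - t)/t| = 1 := by
      have := hnorm
      rw [show z = ((-((1 - t)/t) : ℝ) : ℂ) from rfl, Complex.norm_real,
        Real.norm_eq_abs, abs_neg] at this
      exact this
    have ht : t = 1/2 := by
      rw [abs_div, abs_of_nonneg (by linarith), abs_of_pos ht0] at h4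
      field_simp at h4
      linarith
    refine ⟨ht, ?_⟩
    have : z = -1 := by simp [z, ht]; norm_num
    rwa [this] at hz
  · rintro ⟨ht, hz⟩
    have : z = -1 := by simp [z, ht]; norm_num
    rwa [this]

end Aux

/-!
STATEMENT 9: Let u be a unitary operator on a Hilbert space H.  Define on H ⊕ H
f₀ = [[0, 1], [−1, 0]] and f₁ = [[0, u], [−u⁻¹, 0]].  Then f₀ and f₁ are skew-adjoint
with f₀² = f₁² = −1, and for t ∈ [0,1] the operator (1−t)f₀ + t·f₁ fails to be
invertible exactly when t = 1/2 and −1 lies in the spectrum of u.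
-/
set_option synthInstance.maxHeartbeats 800000 in
set_option maxHeartbeats 1600000 in
theorem stmt_9 {H : Type*} [NormedAddCommGroup H] [InnerProductSpace ℂ H] [CompleteSpace H]
    (u v : H →L[ℂ] H) (huv : u * v = 1) (hvu : v * u = 1)  -- v = u⁻¹
    (hu_unitary : adjoint u = v) :
    (adjoint (blockOp (0 : H →L[ℂ] H) 1 (-1) 0) = -(blockOp (0 : H →L[ℂ] H) 1 (-1) 0)) ∧
    (blockOp (0 : H →L[ℂ] H) 1 (-1) 0 * blockOp (0 : H →L[ℂ] H) 1 (-1) 0 = -1) ∧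
    (adjoint (blockOp (0 : H →L[ℂ] H) u (-v) 0) = -(blockOp (0 : H →L[ℂ] H) u (-v) 0)) ∧
    (blockOp (0 : H →L[ℂ] H) u (-v) 0 * blockOp (0 : H →L[ℂ] H) u (-v) 0 = -1) ∧
    ∀ t ∈ Set.Icc (0 : ℝ) 1,
      (¬ IsUnit ((1 - t) • blockOp (0 : H →L[ℂ] H) 1 (-1) 0 +
          t • blockOp (0 : H →L[ℂ] H) u (-v) 0) ↔
        (t = 1 / 2 ∧ (-1 : ℂ) ∈ spectrum ℂ u)) := by
  have hadj_v : adjoint v = u := by rw [← hu_unitary, adjoint_adjoint]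
  refine ⟨?_, ?_, ?_, ?_, ?_⟩
  · rw [blockOp_adjoint, blockOp_neg]
    congr 1 <;> simp [← star_eq_adjoint]
  · rw [blockOp_mul]
    simpa using blockOp_neg_one
  · rw [blockOp_adjoint, blockOp_neg]
    congr 1 <;> simp [← star_eq_adjoint, star_eq_adjoint, hu_unitary, hadj_v]
  · rw [blockOp_mul]
    simpa [huv, hvu] using blockOp_neg_one
  · intro t ht
    obtain ⟨ht0, ht1⟩ := ht
    have hcombo : (1 - t) • blockOp (0 : H →L[ℂ] H) 1 (-1) 0 +
        t • blockOp (0 : H →L[ℂ] H) u (-v) 0 =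
        blockOp 0 ((1 - t) • 1 + t • u) (-((1 - t) • 1 + t • v)) 0 := by
      rw [blockOp_smul, blockOp_smul, blockOp_add]
      congr 1 <;> simp <;> module
    rw [hcombo]
    have hstar : star ((1 - t) • (1 : H →L[ℂ] H) + t • u) = (1 - t) • 1 + t • v := by
      rw [star_add, star_smul, star_smul, star_one, star_trivial, star_trivial,
        star_eq_adjoint, hu_unitary]
    have hiff : IsUnit (blockOp 0 ((1 - t) • 1 + t • u) (-((1 - t) • 1 + t • v)) 0) ↔
        IsUnit ((1 - t) • (1 : H →L[ℂ] H) + t • u) := by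
      rw [isUnit_blockOp_offdiag, IsUnit.neg_iff, ← hstar, isUnit_star, and_self]
    rw [hiff]
    rcases eq_or_lt_of_le ht0 with h0 | h0
    · subst h0
      have e1 : ((1:ℝ) - 0) • (1 : H →L[ℂ] H) + (0:ℝ) • u = 1 := by rw [sub_zero, zero_smul, one_smul, add_zero]
      rw [e1]
      constructor
      · intro h
        exact (h isUnit_one).elim
      · rintro ⟨h, -⟩
        norm_num at h
    · exact isUnit_convex_iff u v huv hvu hu_unitary t h0 ht1
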